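/- Let 0 < R < H, a = √(H² − R²), α = R/(H + a), and k₀ ∈ ℝ. Define Y(σ) = −(a/2)·((1 + ασ)/(1 − ασ) + (σ + α)/(σ − α)), X′(σ) = −i·a·α·(1/(1 − ασ)² + 1/(σ − α)²), and Y′(σ) = −a·α·(1/(1 − ασ)² − 1/(σ − α)²). Then the circle integral over the unit circle satisfies ∮_{|σ|=1} ( −Y(σ)·(k₀·Y′(σ) − i·X′(σ)) ) dσ = −π·i·R², i.e. the σ^{−1} Laurent coefficient E_{−1} = (1/(2πi))·∮_{|σ|=1} −y(ασ)·(k₀·dy/dσ − i·dx/dσ) dσ equals −R²/2. (This is the identity E_{−1} = −R²/2 that reconciles the coefficient condition A_{−1} − B_{−1} = γE_{−1} of Eq. (4.10c) with the far-field equilibrium condition A_{−1} − B_{−1} = −γR²/2 of Eq. (4.10c′).) -/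

import Mathlib

open Complex

/-- `y(ασ)`, the vertical coordinate of the tunnel periphery point. -/
noncomputable def Yf (a α : ℝ) (σ : ℂ) : ℂ :=
  -((a : ℂ) / 2) * ((1 + (α : ℂ) * σ) / (1 - (α : ℂ) * σ) + (σ + (α : ℂ)) / (σ - (α : ℂ)))

/-- `dx(ασ)/dσ`. -/
noncomputable def Xd (a α : ℝ) (σ : ℂ) : ℂ :=
  -Complex.I * a * α * (1 / (1 - (α : ℂ) * σ) ^ 2 + 1 / (σ - (α : ℂ)) ^ 2)

/-- `dy(ασ)/dσ`. -/
noncomputable def Yd (a α : ℝ) (σ : ℂ) : ℂ :=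
  -(a : ℂ) * α * (1 / (1 - (α : ℂ) * σ) ^ 2 - 1 / (σ - (α : ℂ)) ^ 2)

/-!
The integrand is rational in `σ`, with poles only at `α` (inside the unit circle, since
`0 < α < 1`) and at `1/α` (outside). Its partial fraction expansion therefore splits into a
principal part at `α` plus a function holomorphic on the closed unit disk; by Cauchy's theorem
only the `1/(σ - α)` term contributes, and its coefficient `-2a²α²/(1 - α²)²` equals `-R²/2`
because `2aα = R(1 - α²)`.
-/

open Metric

theorem circleIntegral_principalPart_add {c β : ℂ} {R : ℝ} (hβ : β ∈ ball c R) (c₁ c₂ c₃ : ℂ)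
    {h : ℂ → ℂ} (hh : DiffContOnCl ℂ h (ball c R)) :
    (∮ z in C(c, R), (c₁ / (z - β) + c₂ / (z - β) ^ 2 + c₃ / (z - β) ^ 3 + h z)) =
      c₁ * (2 * Real.pi * I) := by
  have hR : 0 < R := pos_of_mem_ball hβ
  have hβ_sphere : β ∉ sphere c |R| := by
    rw [abs_of_pos hR]
    exact fun hs => (mem_ball.1 hβ).ne (mem_sphere.1 hs)
  have hpow_int (n : ℕ) (d : ℂ) : CircleIntegrable (fun z => d / (z - β) ^ n) c R := by
    have : CircleIntegrable (fun z => d * (z - β) ^ (-(n : ℤ))) c R :=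
      IntervalIntegrable.const_mul (circleIntegrable_sub_zpow_iff.2 (Or.inr (Or.inr hβ_sphere))) d
    simpa [div_eq_mul_inv] using this
  have hpow_eq_zero (n : ℕ) (hn : 1 < n) (d : ℂ) : (∮ z in C(c, R), d / (z - β) ^ n) = 0 := by
    have := circleIntegral.integral_sub_zpow_of_ne (n := -n) (by omega) c β R
    simp only [zpow_neg, zpow_natCast] at this
    simp [div_eq_mul_inv, circleIntegral.integral_const_mul, this]
  have h_int : CircleIntegrable h c R :=
    (hh.continuousOn.mono (by rw [closure_ball c hR.ne']; exact sphere_subset_closedBall)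
      ).circleIntegrable hR.le
  have h1_int : CircleIntegrable (fun z => c₁ / (z - β)) c R := by simpa using hpow_int 1 c₁
  have h12_int : CircleIntegrable (fun z => c₁ / (z - β) + c₂ / (z - β) ^ 2) c R :=
    h1_int.add (hpow_int 2 c₂)
  have h123_int : CircleIntegrable
      (fun z => c₁ / (z - β) + c₂ / (z - β) ^ 2 + c₃ / (z - β) ^ 3) c R :=
    h12_int.add (hpow_int 3 c₃)
  rw [circleIntegral.integral_add h123_int h_int,
    circleIntegral.integral_add h12_int (hpow_int 3 _),
    circleIntegral.integral_add h1_int (hpow_int 2 _),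
    hpow_eq_zero 2 (by norm_num), hpow_eq_zero 3 (by norm_num), hh.circleIntegral_eq_zero hR.le]
  simp [div_eq_mul_inv, circleIntegral.integral_const_mul,
    circleIntegral.integral_sub_inv_of_mem_ball hβ]

theorem one_sub_mul_ne_zero_of_mem_closedBall {α σ : ℂ} (hα : ‖α‖ < 1)
    (hσ : σ ∈ closedBall (0 : ℂ) 1) : 1 - α * σ ≠ 0 := by
  have : ‖α * σ‖ < 1 := by
    rw [norm_mul]
    exact lt_of_le_of_lt (mul_le_of_le_one_right (norm_nonneg α) (mem_closedBall_zero_iff.1 hσ)) hα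
  exact sub_ne_zero.2 fun h => by simp [← h] at this

theorem diffContOnCl_sum_div_one_sub_mul_pow {α : ℂ} (hα : ‖α‖ < 1) (d₁ d₂ d₃ : ℂ) :
    DiffContOnCl ℂ (fun σ => d₁ / (1 - α * σ) + d₂ / (1 - α * σ) ^ 2 + d₃ / (1 - α * σ) ^ 3)
      (ball 0 1) := by
  have hne (σ : ℂ) (hσ : σ ∈ closedBall 0 1) := one_sub_mul_ne_zero_of_mem_closedBall hα hσ
  refine DifferentiableOn.diffContOnCl ?_
  rw [closure_ball _ one_ne_zero]
  fun_prop (disch := first | exact hne | exact fun σ hσ => pow_ne_zero _ (hne σ hσ))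

theorem sub_ne_zero_of_mem_sphere {α σ : ℂ} (hα : ‖α‖ < 1) (hσ : σ ∈ sphere (0 : ℂ) 1) :
    σ - α ≠ 0 :=
  sub_ne_zero.2 fun h => hα.ne (by simpa [h] using hσ)

theorem neg_Yf_mul_eq_partialFractions (a α k₀ : ℝ) {σ : ℂ} (hσα : σ - α ≠ 0)
    (hασ : 1 - α * σ ≠ 0) (hα : (1 : ℂ) - α ^ 2 ≠ 0) :
    -(Yf a α σ) * ((k₀ : ℂ) * Yd a α σ - I * Xd a α σ) =
      -2 * a ^ 2 * α ^ 2 / (1 - α ^ 2) ^ 2 / (σ - α)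
        + -(a ^ 2 * α * (1 - k₀)) / (1 - α ^ 2) / (σ - α) ^ 2
        + -(a ^ 2 * α ^ 2 * (1 - k₀)) / (σ - α) ^ 3
        + (-2 * a ^ 2 * α ^ 3 / (1 - α ^ 2) ^ 2 / (1 - α * σ)
          + -(a ^ 2 * α ^ 3 * (k₀ + 1)) / (1 - α ^ 2) / (1 - α * σ) ^ 2
          + -(a ^ 2 * α * (k₀ + 1)) / (1 - α * σ) ^ 3) := by
  unfold Yf Yd Xd
  field_simp
  ring_nf
  simp only [I_sq]
  ring

section VerruijtParameters

variable {R H a α : ℝ}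

theorem verruijt_alpha_mem_Ioo (hR : 0 < R) (hRH : R < H) (ha : 0 ≤ a)
    (hα : α = R / (H + a)) : α ∈ Set.Ioo 0 1 := by
  have hHa : 0 < H + a := by linarith
  rw [hα]
  exact ⟨div_pos hR hHa, (div_lt_one hHa).2 (by linarith)⟩

theorem neg_two_mul_sq_div_eq_neg_sq_div_two {K : Type*} [Field K] [NeZero (2 : K)] {a α R : K}
    (hkey : 2 * a * α = R * (1 - α ^ 2)) (hα : 1 - α ^ 2 ≠ 0) :
    -2 * a ^ 2 * α ^ 2 / (1 - α ^ 2) ^ 2 = -R ^ 2 / 2 := by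
  rw [div_eq_div_iff (pow_ne_zero 2 hα) two_ne_zero]
  linear_combination (-R * (1 - α ^ 2) - 2 * a * α) * hkey

theorem two_mul_mul_verruijt_alpha (ha : a ^ 2 = H ^ 2 - R ^ 2) (hHa : H + a ≠ 0)
    (hα : α = R / (H + a)) : 2 * a * α = R * (1 - α ^ 2) := by
  rw [hα]
  field_simp
  linear_combination R * ha

end VerruijtParameters

/-- The identity `E_{−1} = −R²/2` reconciling Eq. (4.10c) with Eq. (4.10c′):
the circle integral of `−y(ασ)(k₀ y′(σ) − i x′(σ))` over the unit circle
equals `−πiR²`, i.e. the `σ^{−1}` Laurent coefficient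
`E_{−1} = (1/(2πi)) ∮ −y(ασ)(k₀ dy/dσ − i dx/dσ) dσ` equals `−R²/2`. -/
theorem residue_E_neg_one (R H : ℝ) (hR : 0 < R) (hRH : R < H) (k₀ : ℝ)
    (a α : ℝ) (ha : a = Real.sqrt (H ^ 2 - R ^ 2)) (hα : α = R / (H + a)) :
    (∮ σ in C(0, 1), (-(Yf a α σ) * ((k₀ : ℂ) * Yd a α σ - Complex.I * Xd a α σ)))
        = -Real.pi * Complex.I * R ^ 2 ∧
    (1 / (2 * Real.pi * Complex.I)) *
        (∮ σ in C(0, 1), (-(Yf a α σ) * ((k₀ : ℂ) * Yd a α σ - Complex.I * Xd a α σ)))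
        = -(R ^ 2) / 2 := by
  have ha_nonneg : 0 ≤ a := ha ▸ Real.sqrt_nonneg _
  obtain ⟨hα_pos, hα_lt_one⟩ := verruijt_alpha_mem_Ioo hR hRH ha_nonneg hα
  have ha_sq : a ^ 2 = H ^ 2 - R ^ 2 := by
    rw [ha]; exact Real.sq_sqrt (by nlinarith)
  have hkey : (2 * a * α : ℂ) = R * (1 - α ^ 2) := by
    exact_mod_cast two_mul_mul_verruijt_alpha ha_sq (by linarith) hα
  have hα_norm : ‖(α : ℂ)‖ < 1 := by simpa [abs_of_pos hα_pos] using hα_lt_one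
  have hα_sq : (1 : ℂ) - α ^ 2 ≠ 0 := by exact_mod_cast (by nlinarith : 1 - α ^ 2 ≠ 0)
  have hI : (∮ σ in C(0, 1), (-(Yf a α σ) * ((k₀ : ℂ) * Yd a α σ - I * Xd a α σ)))
      = -Real.pi * I * R ^ 2 := by
    rw [circleIntegral.integral_congr zero_le_one fun σ hσ =>
        neg_Yf_mul_eq_partialFractions a α k₀ (sub_ne_zero_of_mem_sphere hα_norm hσ)
          (one_sub_mul_ne_zero_of_mem_closedBall hα_norm (sphere_subset_closedBall hσ)) hα_sq,
      circleIntegral_principalPart_add (mem_ball_zero_iff.2 hα_norm) _ _ _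
        (diffContOnCl_sum_div_one_sub_mul_pow hα_norm _ _ _),
      neg_two_mul_sq_div_eq_neg_sq_div_two hkey hα_sq]
    ring
  exact ⟨hI, by rw [hI]; field_simp⟩
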